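/- arXiv:math/0412185 — 2 statements merged into one kernel-verified Lean document; each statement's English description precedes it below -/
import Mathlib

section
/- Let H be a finite-dimensional inner product space, and let A_t and A_∞ be positive semi-definite self-adjoint operators on H with A_t → A_∞ in operator norm. Let λ_t and λ_∞ denote the smallest strictly positive eigenvalues of A_t and A_∞ respectively (assumed to exist). Then limsup_{t→∞} λ_t ≤ λ_∞, with no assumption on the dimensions of the kernels. -/
/-!
Let `ψ` be an eigenvector of `A∞` for `λ∞`. The test vector `Aₜ ψ` lies in the range of `Aₜ`,
the orthogonal complement of its kernel; since every eigenvalue of `Aₜ` is `0` or at least `λₜ`,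
the Rayleigh quotient of `Aₜ` is bounded below by `λₜ` there. As `t → ∞`, the Rayleigh
quotient of `Aₜ` at `Aₜ ψ` tends to that of `A∞` at `A∞ ψ = λ∞ ψ`, which is `λ∞`.
-/

open Filter Topology Module.End

section Real

variable {E : Type*} [NormedAddCommGroup E] [InnerProductSpace ℝ E] [FiniteDimensional ℝ E]

theorem LinearMap.IsPositive.mul_norm_sq_le_inner_of_mem_range
    {T : E →ₗ[ℝ] E} (hT : T.IsPositive) {l : ℝ}
    (hl : ∀ μ, HasEigenvalue T μ → 0 < μ → l ≤ μ) {v : E} (hv : v ∈ LinearMap.range T) :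
    l * ‖v‖ ^ 2 ≤ inner ℝ (T v) v := by
  obtain ⟨w, rfl⟩ := hv
  set b := hT.isSymmetric.eigenvectorBasis rfl
  set μ := hT.isSymmetric.eigenvalues rfl
  have coord (x : E) (i) : inner ℝ (b i) (T x) = μ i * inner ℝ (b i) x := by
    rw [← b.repr_apply_apply, ← b.repr_apply_apply]
    exact hT.isSymmetric.eigenvectorBasis_apply_self_apply rfl x i
  rw [← b.sum_sq_inner_right, ← b.sum_inner_mul_inner, Finset.mul_sum]
  refine Finset.sum_le_sum fun i _ => ?_
  rw [real_inner_comm (b i), coord (T w), coord w]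
  -- Each coordinate of `T w` carries a factor `μ i`, so zero eigenvalues contribute nothing.
  rcases (hT.nonneg_eigenvalues rfl i).eq_or_lt with hzero | hpos
  · simp [μ, ← hzero]
  · have hle : l ≤ μ i := hl (μ i) (hT.isSymmetric.hasEigenvalue_eigenvalues rfl i) hpos
    nlinarith [sq_nonneg (μ i * inner ℝ (b i) w)]

theorem ContinuousLinearMap.IsPositive.le_rayleighQuotient_of_mem_range
    {T : E →L[ℝ] E} (hT : T.IsPositive) {l : ℝ}
    (hl : ∀ μ, HasEigenvalue (T : E →ₗ[ℝ] E) μ → 0 < μ → l ≤ μ) {v : E}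
    (hv : v ∈ LinearMap.range (T : E →ₗ[ℝ] E)) (hv₀ : v ≠ 0) :
    l ≤ T.rayleighQuotient v := by
  rw [ContinuousLinearMap.rayleighQuotient, ContinuousLinearMap.reApplyInnerSelf_apply,
    le_div_iff₀ (by positivity)]
  exact hT.toLinearMap.mul_norm_sq_le_inner_of_mem_range hl hv

end Real

namespace ContinuousLinearMap

variable {𝕜 E : Type*} [RCLike 𝕜] [NormedAddCommGroup E] [InnerProductSpace 𝕜 E]

theorem continuousAt_rayleighQuotient {T : E →L[𝕜] E} {v : E} (hv : v ≠ 0) :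
    ContinuousAt (fun p : (E →L[𝕜] E) × E => p.1.rayleighQuotient p.2) (T, v) := by
  simp only [rayleighQuotient, reApplyInnerSelf_apply]
  refine ContinuousAt.div ?_ (by fun_prop) (by positivity)
  exact RCLike.continuous_re.continuousAt.comp
    ((continuousAt_fst.clm_apply continuousAt_snd).inner continuousAt_snd)

theorem rayleighQuotient_eq_of_apply_eq_smul {T : E →L[𝕜] E} {c : ℝ} {v : E}
    (h : T v = (c : 𝕜) • v) (hv : v ≠ 0) : T.rayleighQuotient v = c := by
  rw [rayleighQuotient, reApplyInnerSelf_apply, h, inner_smul_left, inner_self_eq_norm_sq_to_K]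
  simp [field, hv]

end ContinuousLinearMap

theorem stmt11_general (H : Type*) [NormedAddCommGroup H] [InnerProductSpace ℝ H]
    [FiniteDimensional ℝ H]
    (A : ℕ → H →L[ℝ] H) (Ainf : H →L[ℝ] H)
    (hsa : ∀ t, IsSelfAdjoint (A t))
    (hpsd : ∀ t v, 0 ≤ (inner ℝ (A t v) v : ℝ))
    (hconv : Tendsto A atTop (nhds Ainf))
    (lam : ℕ → ℝ) (laminf : ℝ)
    (hlam_min : ∀ t μ, Module.End.HasEigenvalue ((A t) : H →ₗ[ℝ] H) μ → 0 < μ → lam t ≤ μ)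
    (hlaminf_eig : Module.End.HasEigenvalue (Ainf : H →ₗ[ℝ] H) laminf)
    (hlaminf_pos : 0 < laminf) :
    ∀ ε > 0, ∀ᶠ t in atTop, lam t ≤ laminf + ε := by
  intro ε hε
  obtain ⟨ψ, hψ, hψ₀⟩ := hlaminf_eig.exists_hasEigenvector
  have hAinfψ : Ainf ψ = laminf • ψ := mem_eigenspace_iff.mp hψ
  have hAinfψ₀ : Ainf ψ ≠ 0 := by simp [hAinfψ, hlaminf_pos.ne', hψ₀]
  have hAψ : Tendsto (fun t => A t ψ) atTop (𝓝 (Ainf ψ)) :=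
    ((continuous_eval_const ψ).tendsto Ainf).comp hconv
  have hlim : Tendsto (fun t => (A t).rayleighQuotient (A t ψ)) atTop (𝓝 laminf) := by
    have := (ContinuousLinearMap.continuousAt_rayleighQuotient hAinfψ₀).tendsto.comp
      (hconv.prodMk_nhds hAψ)
    rwa [hAinfψ, ContinuousLinearMap.rayleigh_smul _ _ hlaminf_pos.ne',
      ContinuousLinearMap.rayleighQuotient_eq_of_apply_eq_smul hAinfψ hψ₀] at this
  have hclose := hlim.eventually (eventually_le_nhds (lt_add_of_pos_right laminf hε))
  filter_upwards [hAψ.eventually_ne hAinfψ₀, hclose] with t hAψ₀ hle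
  have hApos : (A t).IsPositive :=
    ContinuousLinearMap.isPositive_def'.mpr ⟨hsa t, hpsd t⟩
  exact (hApos.le_rayleighQuotient_of_mem_range (hlam_min t) ⟨ψ, rfl⟩ hAψ₀).trans hle

theorem stmt11 (H : Type*) [NormedAddCommGroup H] [InnerProductSpace ℝ H]
    [FiniteDimensional ℝ H]
    (A : ℕ → H →L[ℝ] H) (Ainf : H →L[ℝ] H)
    (hsa : ∀ t, IsSelfAdjoint (A t)) (hsainf : IsSelfAdjoint Ainf)
    (hpsd : ∀ t v, 0 ≤ (inner ℝ (A t v) v : ℝ))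
    (hpsdinf : ∀ v, 0 ≤ (inner ℝ (Ainf v) v : ℝ))
    (hconv : Tendsto A atTop (nhds Ainf))
    (lam : ℕ → ℝ) (laminf : ℝ)
    (hlam_eig : ∀ t, Module.End.HasEigenvalue ((A t) : H →ₗ[ℝ] H) (lam t))
    (hlam_pos : ∀ t, 0 < lam t)
    (hlam_min : ∀ t μ, Module.End.HasEigenvalue ((A t) : H →ₗ[ℝ] H) μ → 0 < μ → lam t ≤ μ)
    (hlaminf_eig : Module.End.HasEigenvalue (Ainf : H →ₗ[ℝ] H) laminf)
    (hlaminf_pos : 0 < laminf)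
    (hlaminf_min : ∀ μ, Module.End.HasEigenvalue (Ainf : H →ₗ[ℝ] H) μ → 0 < μ → laminf ≤ μ) :
    ∀ ε > 0, ∀ᶠ t in atTop, lam t ≤ laminf + ε :=
  stmt11_general H A Ainf hsa hpsd hconv lam laminf hlam_min hlaminf_eig hlaminf_pos
end

section
/- Let Y, Z : [0, ∞) → [0, ∞) be continuous with Y differentiable, and suppose Y'(t) ≤ C₁·Y(t) + C₂·√(Z(t))·√(Y(t)) for constants C₁, C₂ ≥ 0, with ∫₀^∞ Y(t) dt < ∞ and ∫₀^∞ Z(t) dt < ∞. Then Y(t) → 0 as t → ∞. -/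
/-! Set `φ = C₁ Y + C₂ √Z √Y`; it is integrable since `√Z √Y ≤ (|Z| + |Y|) / 2`. On each window
`[t - 1, t]` pick a point `b` where `Y b` is at most the mean of `Y`; integrating `Y' ≤ φ` from `b`
to `t` gives `Y t ≤ ∫_{t-1}^t Y + ∫_{t-1}^t |φ|`. Both window integrals are differences of
convergent improper integrals, hence tend to `0`. -/

open MeasureTheory Filter Set Topology

theorem integrableOn_sqrt_mul_sqrt {α : Type*} [MeasurableSpace α] {μ : Measure α} {s : Set α}
    {f g : α → ℝ} (hf : IntegrableOn f s μ) (hg : IntegrableOn g s μ) :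
    IntegrableOn (fun x => √(f x) * √(g x)) s μ := by
  refine Integrable.mono' ((hf.abs.add hg.abs).div_const 2)
    ((Real.continuous_sqrt.comp_aestronglyMeasurable hf.aestronglyMeasurable).mul
      (Real.continuous_sqrt.comp_aestronglyMeasurable hg.aestronglyMeasurable))
    (ae_of_all _ fun x => ?_)
  rw [Real.norm_eq_abs, abs_of_nonneg (by positivity), Pi.add_apply]
  calc √(f x) * √(g x) ≤ √|f x| * √|g x| :=
        mul_le_mul (Real.sqrt_le_sqrt (le_abs_self _)) (Real.sqrt_le_sqrt (le_abs_self _))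
          (Real.sqrt_nonneg _) (Real.sqrt_nonneg _)
    _ ≤ (|f x| + |g x|) / 2 := by
        nlinarith [sq_nonneg (√|f x| - √|g x|), Real.sq_sqrt (abs_nonneg (f x)),
          Real.sq_sqrt (abs_nonneg (g x))]

theorem tendsto_intervalIntegral_of_integrableOn_Ioi {E : Type*} [NormedAddCommGroup E]
    [NormedSpace ℝ E] {f : ℝ → E} {a : ℝ} (hf : IntegrableOn f (Ioi a)) {ι : Type*}
    {l : Filter ι} [l.IsCountablyGenerated] {u v : ι → ℝ} (hu : Tendsto u l atTop)
    (hv : Tendsto v l atTop) :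
    Tendsto (fun i => ∫ x in u i..v i, f x) l (𝓝 0) := by
  have hint : ∀ b, a ≤ b → IntervalIntegrable f volume a b := fun b hab =>
    (intervalIntegrable_iff_integrableOn_Ioc_of_le hab).2 (hf.mono_set Ioc_subset_Ioi_self)
  have hdiff : ∀ᶠ i in l,
      (∫ x in a..v i, f x) - (∫ x in a..u i, f x) = ∫ x in u i..v i, f x := by
    filter_upwards [hu.eventually_ge_atTop a, hv.eventually_ge_atTop a] with i hui hvi
    exact intervalIntegral.integral_interval_sub_left (hint _ hvi) (hint _ hui)
  simpa using ((intervalIntegral_tendsto_integral_Ioi a hf hv).sub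
    (intervalIntegral_tendsto_integral_Ioi a hf hu)).congr' hdiff

theorem le_intervalAverage_add_integral_abs_of_deriv_le {f φ : ℝ → ℝ} {s t : ℝ} (hst : s < t)
    (hcont : ContinuousOn f (Icc s t)) (hdiff : ∀ x ∈ Ioo s t, DifferentiableAt ℝ f x)
    (hφ : IntegrableOn φ (Ioc s t)) (hderiv : ∀ x ∈ Ioo s t, deriv f x ≤ φ x) :
    f t ≤ (⨍ x in s..t, f x) + ∫ x in s..t, |φ x| := by
  rw [uIoc_of_le hst.le]
  obtain ⟨b, ⟨hsb, hbt⟩, hfb⟩ := exists_le_setAverage (μ := volume) (by simp [hst])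
    (by simp) ((hcont.integrableOn_Icc).mono_set Ioc_subset_Icc_self)
  have hφ' : IntervalIntegrable φ volume s t :=
    (intervalIntegrable_iff_integrableOn_Ioc_of_le hst.le).2 hφ
  have hφb : IntervalIntegrable φ volume b t :=
    (intervalIntegrable_iff_integrableOn_Ioc_of_le hbt).2
      (hφ.mono_set (Ioc_subset_Ioc_left hsb.le))
  have hftc : f t - f b ≤ ∫ x in b..t, φ x :=
    intervalIntegral.sub_le_integral_of_hasDeriv_right_of_le hbt
      (hcont.mono (Icc_subset_Icc_left hsb.le))
      (fun x hx => (hdiff x ⟨hsb.trans hx.1, hx.2⟩).hasDerivAt.hasDerivWithinAt)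
      (hφ.mono_set (Icc_subset_Ioc hsb le_rfl))
      (fun x hx => hderiv x ⟨hsb.trans hx.1, hx.2⟩)
  have htail : ∫ x in b..t, φ x ≤ ∫ x in s..t, |φ x| :=
    calc ∫ x in b..t, φ x ≤ ∫ x in b..t, |φ x| :=
          intervalIntegral.integral_mono_on hbt hφb hφb.abs fun x _ => le_abs_self _
      _ ≤ ∫ x in s..t, |φ x| :=
          intervalIntegral.integral_mono_interval hsb.le hbt le_rfl
            (ae_of_all _ fun x => abs_nonneg _) hφ'.abs
  linarith

theorem stmt14_general (Y Z : ℝ → ℝ) (C₁ C₂ : ℝ)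
    (hYpos : ∀ t, 0 ≤ t → 0 ≤ Y t)
    (hYdiff : ∀ t, 0 ≤ t → DifferentiableAt ℝ Y t)
    (hderiv : ∀ t, 0 ≤ t →
      deriv Y t ≤ C₁ * Y t + C₂ * Real.sqrt (Z t) * Real.sqrt (Y t))
    (hYint : IntegrableOn Y (Set.Ici 0))
    (hZint : IntegrableOn Z (Set.Ici 0)) :
    Tendsto Y atTop (nhds 0) := by
  set φ : ℝ → ℝ := fun t => C₁ * Y t + C₂ * √(Z t) * √(Y t)
  have hφ : IntegrableOn φ (Ici 0) := by
    simpa only [IntegrableOn, φ, mul_assoc, Pi.add_def] using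
      (hYint.const_mul C₁).add ((integrableOn_sqrt_mul_sqrt hZint hYint).const_mul C₂)
  have hbound : ∀ t, 1 ≤ t → Y t ≤ (∫ x in t - 1..t, Y x) + ∫ x in t - 1..t, |φ x| := by
    intro t ht
    have hsub : Icc (t - 1) t ⊆ Ici 0 := fun x hx => (sub_nonneg.2 ht).trans hx.1
    have := le_intervalAverage_add_integral_abs_of_deriv_le (sub_one_lt t)
      (fun x hx => (hYdiff x (hsub hx)).continuousAt.continuousWithinAt)
      (fun x hx => hYdiff x (hsub (Ioo_subset_Icc_self hx)))
      (hφ.mono_set (Ioc_subset_Icc_self.trans hsub))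
      (fun x hx => hderiv x (hsub (Ioo_subset_Icc_self hx)))
    rwa [interval_average_eq, sub_sub_cancel, inv_one, one_smul] at this
  have hshift : Tendsto (fun t : ℝ => t - 1) atTop atTop :=
    tendsto_atTop_add_const_right _ _ tendsto_id
  have hlim := (tendsto_intervalIntegral_of_integrableOn_Ioi
    (hYint.mono_set Ioi_subset_Ici_self) hshift tendsto_id).add
    (tendsto_intervalIntegral_of_integrableOn_Ioi
      ((hφ.mono_set Ioi_subset_Ici_self).abs) hshift tendsto_id)
  rw [add_zero] at hlim
  exact tendsto_of_tendsto_of_tendsto_of_le_of_le' tendsto_const_nhds hlim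
    (eventually_ge_atTop 0 |>.mono hYpos) (eventually_ge_atTop 1 |>.mono hbound)

theorem stmt14 (Y Z : ℝ → ℝ) (C₁ C₂ : ℝ) (hC₁ : 0 ≤ C₁) (hC₂ : 0 ≤ C₂)
    (hYpos : ∀ t, 0 ≤ t → 0 ≤ Y t) (hZpos : ∀ t, 0 ≤ t → 0 ≤ Z t)
    (hYcont : ContinuousOn Y (Set.Ici 0)) (hZcont : ContinuousOn Z (Set.Ici 0))
    (hYdiff : ∀ t, 0 ≤ t → DifferentiableAt ℝ Y t)
    (hderiv : ∀ t, 0 ≤ t →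
      deriv Y t ≤ C₁ * Y t + C₂ * Real.sqrt (Z t) * Real.sqrt (Y t))
    (hYint : IntegrableOn Y (Set.Ici 0))
    (hZint : IntegrableOn Z (Set.Ici 0)) :
    Tendsto Y atTop (nhds 0) :=
  stmt14_general Y Z C₁ C₂ hYpos hYdiff hderiv hYint hZint
end
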